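/- Let X be a Cubist subset of ℤ^r. The map λ : X → F_X sending x to x + F_{i(x)}, where i(x) = max{j : x + ε_1 + ... + ε_{j−1} ∈ X}, is a bijection from X to the set F_X of facets contained in X. -/

import Mathlib

/-- The translate `S[ζ] = {x + ζ(1,...,1) : x ∈ S}`. -/
def trSet {r : ℕ} (S : Set (Fin r → ℤ)) (ζ : ℤ) : Set (Fin r → ℤ) :=
  (fun x => x + fun _ => ζ) '' S

/-- A Cubist subset of `ℤ^r`: `X = X⁻ \ X⁻[-1]` for a nonempty proper ideal `X⁻`. -/
def IsCubist {r : ℕ} (X : Set (Fin r → ℤ)) : Prop :=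
  ∃ I : Set (Fin r → ℤ), I.Nonempty ∧ I ≠ Set.univ ∧ IsLowerSet I ∧ X = I \ trSet I (-1)

/-- The model facet `F_i = {∑_{j<i} a_j ε_j - ∑_{j>i} a_j ε_j : a_j ∈ {0,1}}`
(indices `0`-based). -/
def FacetAt {r : ℕ} (i : Fin r) : Set (Fin r → ℤ) :=
  {z | z i = 0 ∧ ∀ j : Fin r, (j < i → (z j = 0 ∨ z j = 1)) ∧ (i < j → (z j = 0 ∨ z j = -1))}

/-- The model cone `C_i = ℤ_{≤0}^{i-1} × ℤ × ℤ_{≥0}^{r-i}` (indices `0`-based). -/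
def ConeAt {r : ℕ} (i : Fin r) : Set (Fin r → ℤ) :=
  {z | (∀ j : Fin r, j < i → z j ≤ 0) ∧ (∀ j : Fin r, i < j → 0 ≤ z j)}

/-- The point `x + ε_1 + ... + ε_{i}` (0-based: sum of the first `i` basis vectors). -/
def prefixPt {r : ℕ} (x : Fin r → ℤ) (i : Fin r) : Fin r → ℤ :=
  fun j => x j + if j < i then 1 else 0

/-- `i` is the largest index such that `x + ε_1 + ... + ε_{i-1} ∈ X`. -/
def IsMaxIdx {r : ℕ} (X : Set (Fin r → ℤ)) (x : Fin r → ℤ) (i : Fin r) : Prop :=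
  prefixPt x i ∈ X ∧ ∀ j : Fin r, prefixPt x j ∈ X → j ≤ i

/-- The vertex-facet map: `λ x = x + F_{i(x)}` where `i(x)` is the maximal index. -/
def LamRel {r : ℕ} (X : Set (Fin r → ℤ)) (x : Fin r → ℤ) (F : Set (Fin r → ℤ)) : Prop :=
  ∃ i : Fin r, IsMaxIdx X x i ∧ F = {z : Fin r → ℤ | z - x ∈ FacetAt i}

/-- A facet of `ℤ^r` is a translate `y + F_i` of a model facet. -/
def IsFacet {r : ℕ} (F : Set (Fin r → ℤ)) : Prop :=
  ∃ (y : Fin r → ℤ) (i : Fin r), F = {z : Fin r → ℤ | z - y ∈ FacetAt i}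

/-
The facet `x + F_i` is the box `[x - ε_{>i}, x + ε_{<i}]` (the two corners agree in coordinate `i`),
and a box `[a, b]` lies in `X = X⁻ \ X⁻[-1]` exactly when `b ∈ X⁻` and `a + 1 ∉ X⁻`.
For a vertex `x` with maximal index `i`, the top corner `x + ε_{<i}` is in `X⁻`, and
`(x - ε_{>i}) + 1 = x + ε_{≤i}` is not: it is either `x + 1 ∉ X⁻`, or the next prefix point `p`,
and `p ∈ X⁻ \ X` would give `x + 1 ≤ p + 1 ∈ X⁻`. Conversely, if `y + F_i ⊆ X`, every prefix point
`y + ε_{<k}` with `k > i` dominates `(y - ε_{>i}) + 1 ∉ X⁻`, so `i` is the maximal index of `y`.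
Injectivity holds because a box determines its corners, and the corners of `x + F_i` determine `i`
and `x`.
-/
lemma mem_trSet {r : ℕ} {S : Set (Fin r → ℤ)} {ζ : ℤ} {x : Fin r → ℤ} :
    x ∈ trSet S ζ ↔ (x - fun _ => ζ) ∈ S := by
  constructor
  · rintro ⟨a, ha, rfl⟩
    rwa [add_sub_cancel_right]
  · exact fun h => ⟨_, h, sub_add_cancel _ _⟩

lemma mem_trSet_neg_one {r : ℕ} {S : Set (Fin r → ℤ)} {x : Fin r → ℤ} :
    x ∈ trSet S (-1) ↔ x + 1 ∈ S := by
  rw [mem_trSet, sub_eq_add_neg]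
  rfl

lemma IsLowerSet.trSet {r : ℕ} {S : Set (Fin r → ℤ)} (hS : IsLowerSet S) (ζ : ℤ) :
    IsLowerSet (trSet S ζ) := fun _ _ hyx hx =>
  mem_trSet.2 (hS (sub_le_sub_right hyx _) (mem_trSet.1 hx))

lemma Set.Icc_subset_diff_iff {α : Type*} [Preorder α] {I J : Set α} (hI : IsLowerSet I)
    (hJ : IsLowerSet J) {a b : α} (hab : a ≤ b) :
    Set.Icc a b ⊆ I \ J ↔ b ∈ I ∧ a ∉ J := by
  refine ⟨fun h => ⟨(h ⟨hab, le_rfl⟩).1, (h ⟨le_rfl, hab⟩).2⟩, ?_⟩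
  rintro ⟨hb, ha⟩ z ⟨haz, hzb⟩
  exact ⟨hI hzb hb, fun hz => ha (hJ haz hz)⟩

def facetBot {r : ℕ} (x : Fin r → ℤ) (i : Fin r) : Fin r → ℤ :=
  fun j => x j - if i < j then 1 else 0

section Facet

variable {r : ℕ} {x : Fin r → ℤ} {i : Fin r}

lemma facetBot_le : facetBot x i ≤ x := fun j => by
  simp only [facetBot]; split_ifs <;> omega

lemma le_prefixPt : x ≤ prefixPt x i := fun j => by
  simp only [prefixPt]; split_ifs <;> omega

lemma facetBot_le_prefixPt : facetBot x i ≤ prefixPt x i :=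
  facetBot_le.trans le_prefixPt

lemma facet_eq_Icc :
    {z : Fin r → ℤ | z - x ∈ FacetAt i} = Set.Icc (facetBot x i) (prefixPt x i) := by
  ext z
  simp only [Set.mem_ofPred_eq, FacetAt, Set.mem_Icc, Pi.le_def, facetBot, prefixPt, Pi.sub_apply]
  constructor
  · rintro ⟨hi, h⟩
    refine ⟨fun j => ?_, fun j => ?_⟩ <;>
    · rcases lt_trichotomy j i with hj | rfl | hj
      · have := (h j).1 hj
        simp only [hj, not_lt_of_gt hj, if_true, if_false]; omega
      · simp only [lt_irrefl, if_false]; omega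
      · have := (h j).2 hj
        simp only [hj, not_lt_of_gt hj, if_true, if_false]; omega
  · rintro ⟨hlo, hhi⟩
    refine ⟨by have := hlo i; have := hhi i; simp only [lt_irrefl, if_false] at *; omega,
      fun j => ⟨fun hj => ?_, fun hj => ?_⟩⟩
    · have := hlo j; have := hhi j
      simp only [hj, not_lt_of_gt hj, if_true, if_false] at *; omega
    · have := hlo j; have := hhi j
      simp only [hj, not_lt_of_gt hj, if_true, if_false] at *; omega

lemma prefixPt_sub_facetBot (j : Fin r) :
    prefixPt x i j - facetBot x i j = if j = i then 0 else 1 := by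
  simp only [prefixPt, facetBot]
  rcases lt_trichotomy j i with hj | rfl | hj
  · simp [hj, hj.ne, not_lt_of_gt hj]
  · simp
  · simp [hj, hj.ne', not_lt_of_gt hj]

lemma eq_of_facet_eq {x' : Fin r → ℤ} {i' : Fin r}
    (h : {z : Fin r → ℤ | z - x ∈ FacetAt i} = {z : Fin r → ℤ | z - x' ∈ FacetAt i'}) :
    x = x' := by
  rw [facet_eq_Icc, facet_eq_Icc, Set.Icc_eq_Icc_iff facetBot_le_prefixPt] at h
  obtain ⟨hbot, htop⟩ := h
  have hwidth := prefixPt_sub_facetBot (x := x') (i := i') i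
  rw [← hbot, ← htop, prefixPt_sub_facetBot] at hwidth
  have hi : i = i' := by_contra fun hne => by simp [hne] at hwidth
  subst hi
  funext j
  simpa [prefixPt] using congrFun htop j

end Facet

section Cubist

variable {r : ℕ} {I : Set (Fin r → ℤ)} {x : Fin r → ℤ} {i : Fin r}

lemma exists_isMaxIdx (hx : x ∈ I \ trSet I (-1)) : ∃ i, IsMaxIdx (I \ trSet I (-1)) x i := by
  have : NeZero r := ⟨by
    rintro rfl
    exact hx.2 (mem_trSet_neg_one.2 (by rw [Subsingleton.elim (x + 1) x]; exact hx.1))⟩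
  have hx0 : prefixPt x 0 = x := funext fun j => by simp [prefixPt]
  obtain ⟨i, hi, hmax⟩ := Set.exists_max_image {j | prefixPt x j ∈ I \ trSet I (-1)} id
    (Set.toFinite _) ⟨0, by rwa [Set.mem_ofPred_eq, hx0]⟩
  exact ⟨i, hi, hmax⟩

lemma facetBot_notMem_trSet_of_isMaxIdx (hI : IsLowerSet I) (hx : x ∈ I \ trSet I (-1))
    (hmax : IsMaxIdx (I \ trSet I (-1)) x i) : facetBot x i ∉ trSet I (-1) := by
  rw [mem_trSet_neg_one]
  intro hbot
  apply hx.2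
  rw [mem_trSet_neg_one]
  by_cases hlast : i.val + 1 < r
  · let k : Fin r := ⟨i.val + 1, hlast⟩
    have hk : facetBot x i + 1 = prefixPt x k := funext fun j => by
      simp only [facetBot, prefixPt, Pi.add_apply, Pi.one_apply, k, Fin.lt_def]
      split_ifs <;> omega
    have hkX : prefixPt x k ∉ I \ trSet I (-1) := fun h =>
      absurd (hmax.2 k h) (not_le.2 (Fin.lt_def.2 (Nat.lt_succ_self _)))
    have hk1 : prefixPt x k + 1 ∈ I := by
      by_contra h
      exact hkX ⟨hk ▸ hbot, fun h' => h (mem_trSet_neg_one.1 h')⟩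
    exact hI (add_le_add le_prefixPt le_rfl) hk1
  · refine hI (fun j => ?_) hbot
    have : ¬ i < j := fun h => hlast (by have := j.isLt; rw [Fin.lt_def] at h; omega)
    simp [facetBot, this]

lemma facet_subset_of_isMaxIdx (hI : IsLowerSet I) (hx : x ∈ I \ trSet I (-1))
    (hmax : IsMaxIdx (I \ trSet I (-1)) x i) :
    {z : Fin r → ℤ | z - x ∈ FacetAt i} ⊆ I \ trSet I (-1) := by
  rw [facet_eq_Icc, Set.Icc_subset_diff_iff hI (hI.trSet _) facetBot_le_prefixPt]
  exact ⟨hmax.1.1, facetBot_notMem_trSet_of_isMaxIdx hI hx hmax⟩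

lemma isMaxIdx_of_facet_subset (hI : IsLowerSet I)
    (hsub : {z : Fin r → ℤ | z - x ∈ FacetAt i} ⊆ I \ trSet I (-1)) :
    IsMaxIdx (I \ trSet I (-1)) x i := by
  rw [facet_eq_Icc] at hsub
  have hbot := ((Set.Icc_subset_diff_iff hI (hI.trSet _) facetBot_le_prefixPt).1 hsub).2
  refine ⟨hsub ⟨facetBot_le_prefixPt, le_rfl⟩, fun k hk => not_lt.1 fun hik => hbot ?_⟩
  refine mem_trSet_neg_one.2 (hI (fun j => ?_) hk.1)
  simp only [facetBot, prefixPt, Pi.add_apply, Pi.one_apply]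
  rcases lt_or_ge i j with hj | hj
  · simp only [hj, if_true]; split_ifs <;> omega
  · simp only [not_lt.2 hj, lt_of_le_of_lt hj hik, if_true, if_false]; omega

end Cubist

/-- `λ : x ↦ x + F_{i(x)}` is a bijection from `X` onto the set of
facets contained in `X`. -/
theorem vertex_facet_bijection (r : ℕ) (X : Set (Fin r → ℤ)) (hX : IsCubist X) :
    (∀ x ∈ X, ∃! F : Set (Fin r → ℤ), LamRel X x F) ∧
    (∀ x ∈ X, ∀ F : Set (Fin r → ℤ), LamRel X x F → IsFacet F ∧ F ⊆ X) ∧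
    (∀ x ∈ X, ∀ x' ∈ X, ∀ F : Set (Fin r → ℤ),
      LamRel X x F → LamRel X x' F → x = x') ∧
    (∀ F : Set (Fin r → ℤ), IsFacet F → F ⊆ X → ∃ x ∈ X, LamRel X x F) := by
  obtain ⟨I, -, -, hI, rfl⟩ := hX
  refine ⟨fun x hx => ?_, ?_, ?_, ?_⟩
  · obtain ⟨i, hi⟩ := exists_isMaxIdx hx
    refine ⟨_, ⟨i, hi, rfl⟩, ?_⟩
    rintro F ⟨i', hi', rfl⟩
    rw [le_antisymm (hi.2 i' hi'.1) (hi'.2 i hi.1)]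
  · rintro x hx F ⟨i, hi, rfl⟩
    exact ⟨⟨x, i, rfl⟩, facet_subset_of_isMaxIdx hI hx hi⟩
  · rintro x - x' - F ⟨i, -, rfl⟩ ⟨i', -, h⟩
    exact eq_of_facet_eq h
  · rintro F ⟨y, i, rfl⟩ hsub
    refine ⟨y, hsub ?_, i, isMaxIdx_of_facet_subset hI hsub, rfl⟩
    rw [facet_eq_Icc]
    exact ⟨facetBot_le, le_prefixPt⟩
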